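/- arXiv:2505.24602 — 2 statements merged into one kernel-verified Lean document; each statement's English description precedes it below -/
import Mathlib

section
/- For every y ∈ ℝ, a > 0 and t > τ, the integral over ξ ∈ (0,∞) of |∂_ξ g(y,ξ,a(t−τ))|, where g(y,ξ,s) = Φ(y−ξ,s) + Φ(y+ξ,s) and Φ(z,s) = (4πs)^{-1/2} exp(−z²/(4s)), is at most 1/√(π a (t−τ)). -/
/-!
Since `∂_ξ g(y, ξ, s) = -∂_zΦ(y - ξ, s) + ∂_zΦ(y + ξ, s)`, the integrand is at most
`|∂_zΦ(y - ξ, s)| + |∂_zΦ(y + ξ, s)|`, and the two reflected half-lines `y - ξ`, `y + ξ` (`ξ > 0`)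
cover the real line exactly once. So the integral is at most the total variation `∫ |∂_zΦ|` of the
Gaussian, which is unimodal and vanishes at infinity, hence has total variation
`2 Φ(0, s) = 1 / √(π s)`.
-/

open MeasureTheory Real Set

/-- The 1D heat kernel `Φ(z,s) = (4πs)^{-1/2} exp(−z²/(4s))`. -/
noncomputable def Phi (z s : ℝ) : ℝ := (1 / Real.sqrt (4 * π * s)) * Real.exp (-z ^ 2 / (4 * s))

/-- The Neumann-type kernel `g(y,ξ,s) = Φ(y−ξ,s) + Φ(y+ξ,s)`. -/
noncomputable def gker (y ξ s : ℝ) : ℝ := Phi (y - ξ) s + Phi (y + ξ) s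

open Filter

theorem integral_Ioi_comp_sub_add_comp_add {f : ℝ → ℝ} (hf : Integrable f) (y : ℝ) :
    ∫ ξ in Ioi 0, (f (y - ξ) + f (y + ξ)) = ∫ z, f z := by
  set k : ℝ → ℝ := fun ξ => f (y - ξ) + f (y + ξ)
  have k_abs : ∀ ξ, k |ξ| = k ξ := by
    intro ξ
    rcases abs_choice ξ with h | h <;> simp only [k, h, sub_neg_eq_add, ← sub_eq_add_neg, add_comm]
  have integral_k : ∫ ξ, k ξ = 2 * ∫ z, f z := by
    rw [integral_add (hf.comp_sub_left y) (hf.comp_add_left y), integral_sub_left_eq_self,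
      integral_add_left_eq_self, two_mul]
  have integral_k_abs := integral_comp_abs (f := k)
  simp only [k_abs] at integral_k_abs
  linarith

theorem Phi_nonneg (z s : ℝ) : 0 ≤ Phi z s := by
  unfold Phi; positivity

theorem Phi_neg (z s : ℝ) : Phi (-z) s = Phi z s := by
  simp only [Phi, neg_sq]

theorem two_mul_Phi_zero (s : ℝ) : 2 * Phi 0 s = 1 / √(π * s) := by
  have h4 : √(4 * π * s) = 2 * √(π * s) := by
    rw [mul_assoc, sqrt_mul zero_le_four, show (4 : ℝ) = 2 ^ 2 by norm_num, sqrt_sq zero_le_two]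
  simp only [Phi, h4]
  field_simp
  simp

theorem hasDerivAt_Phi (z s : ℝ) : HasDerivAt (Phi · s) (-(z / (2 * s)) * Phi z s) z := by
  have h : HasDerivAt (fun x : ℝ => -x ^ 2 / (4 * s)) (-(2 * z) / (4 * s)) z := by
    simpa using (hasDerivAt_pow 2 z).neg.div_const (4 * s)
  refine (h.exp.const_mul (1 / √(4 * π * s))).congr_deriv ?_
  rcases eq_or_ne s 0 with rfl | hs
  · simp
  · simp only [Phi]; field_simp; ring

theorem deriv_Phi (z s : ℝ) : deriv (Phi · s) z = -(z / (2 * s)) * Phi z s :=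
  (hasDerivAt_Phi z s).deriv

theorem tendsto_Phi_atTop {s : ℝ} (hs : 0 < s) : Tendsto (Phi · s) atTop (nhds 0) := by
  have h : Tendsto (fun z : ℝ => -z ^ 2 / (4 * s)) atTop atBot :=
    (tendsto_neg_atTop_atBot.comp (tendsto_pow_atTop two_ne_zero)).atBot_div_const (by positivity)
  simpa [Phi] using (tendsto_exp_atBot.comp h).const_mul (1 / √(4 * π * s))

theorem integrable_deriv_Phi {s : ℝ} (hs : 0 < s) : Integrable (deriv (Phi · s)) := by
  have h := (integrable_mul_exp_neg_mul_sq (b := 1 / (4 * s)) (by positivity)).const_mul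
    (-(1 / √(4 * π * s)) / (2 * s))
  refine h.congr (Eventually.of_forall fun z => ?_)
  rw [deriv_Phi, Phi]
  field_simp

theorem integral_abs_deriv_Phi {s : ℝ} (hs : 0 < s) :
    ∫ z, |deriv (Phi · s) z| = 2 * Phi 0 s := by
  have h_even : ∀ z, |deriv (Phi · s) (|z|)| = |deriv (Phi · s) z| := by
    intro z
    rcases abs_choice z with h | h <;> simp [h, deriv_Phi, Phi_neg, abs_mul, abs_div]
  have deriv_nonpos : ∀ z ∈ Ioi (0 : ℝ), deriv (Phi · s) z ≤ 0 := fun z hz => by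
    rw [deriv_Phi]
    exact mul_nonpos_of_nonpos_of_nonneg (neg_nonpos.2 (div_nonneg hz.out.le (by positivity)))
      (Phi_nonneg z s)
  have h_Ioi : ∫ z in Ioi 0, deriv (Phi · s) z = 0 - Phi 0 s :=
    integral_Ioi_of_hasDerivAt_of_nonpos' (fun z _ => (deriv_Phi z s).symm ▸ hasDerivAt_Phi z s)
      deriv_nonpos (tendsto_Phi_atTop hs)
  have h_abs := integral_comp_abs (f := fun z => |deriv (Phi · s) z|)
  simp only [h_even] at h_abs
  rw [h_abs, setIntegral_congr_fun measurableSet_Ioi (fun z hz => abs_of_nonpos (deriv_nonpos z hz)),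
    integral_neg, h_Ioi]
  ring

theorem abs_deriv_gker_le (y s ξ : ℝ) :
    |deriv (gker y · s) ξ| ≤ |deriv (Phi · s) (y - ξ)| + |deriv (Phi · s) (y + ξ)| := by
  have h_sub := (hasDerivAt_Phi (y - ξ) s).comp ξ ((hasDerivAt_id ξ).const_sub y)
  have h_add := (hasDerivAt_Phi (y + ξ) s).comp ξ ((hasDerivAt_id ξ).const_add y)
  have h : HasDerivAt (gker y · s)
      (-deriv (Phi · s) (y - ξ) + deriv (Phi · s) (y + ξ)) ξ :=
    (h_sub.add h_add).congr_deriv (by simp [deriv_Phi])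
  rw [h.deriv]
  simpa using abs_add_le (-deriv (Phi · s) (y - ξ)) (deriv (Phi · s) (y + ξ))

theorem stmt0 (y a t τ : ℝ) (ha : 0 < a) (htτ : τ < t) :
    (∫ ξ in Set.Ioi (0 : ℝ), |deriv (fun ξ' => gker y ξ' (a * (t - τ))) ξ|)
      ≤ 1 / Real.sqrt (π * a * (t - τ)) := by
  set s := a * (t - τ)
  have hs : 0 < s := mul_pos ha (sub_pos.2 htτ)
  have h_int := (integrable_deriv_Phi hs).abs
  calc (∫ ξ in Ioi 0, |deriv (gker y · s) ξ|)
      ≤ ∫ ξ in Ioi 0, (|deriv (Phi · s) (y - ξ)| + |deriv (Phi · s) (y + ξ)|) :=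
        integral_mono_of_nonneg (.of_forall fun _ => abs_nonneg _)
          ((h_int.comp_sub_left y).add (h_int.comp_add_left y)).integrableOn
          (.of_forall (abs_deriv_gker_le y s))
    _ = ∫ z, |deriv (Phi · s) z| := integral_Ioi_comp_sub_add_comp_add h_int y
    _ = 2 * Phi 0 s := integral_abs_deriv_Phi hs
    _ = 1 / √(π * a * (t - τ)) := by rw [two_mul_Phi_zero, mul_assoc]
end

section
/- Let φ : ℝ → ℝ be Lipschitz with constant ‖φ'‖_∞ and let ε > 0. Then for all t ≥ ε and y ∈ ℝ, |∂_y² ∫_ℝ φ(ξ)Φ(y−ξ,t) dξ| ≤ √2 ‖φ'‖_∞ / √ε, where Φ is the 1D heat kernel. -/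
/-!
Since `φ` grows at most linearly and `Φ(·, t)` decays like a Gaussian, one may differentiate once
under the integral, which puts the derivative on the kernel: `u' = φ ⋆ ∂_zΦ`. As `φ` is
`L`-Lipschitz and `‖∂_zΦ(·, t)‖₁ = 1 / √(πt)`, the function `u'` is Lipschitz with constant
`L / √(πt)`, which bounds `u''`; finally `1 / √(πt) ≤ √2 / √ε` for `t ≥ ε`.
-/

open MeasureTheory Real Set

lemma integrable_one_add_abs_sq_mul_exp_neg_mul_sq {b : ℝ} (hb : 0 < b) :
    Integrable fun z : ℝ => (1 + |z|) ^ 2 * exp (-b * z ^ 2) := by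
  have h₀ := integrable_exp_neg_mul_sq hb
  have h₁ := (integrable_mul_exp_neg_mul_sq hb).norm
  have h₂ : Integrable fun z : ℝ => z ^ 2 * exp (-b * z ^ 2) := by
    simpa using integrable_rpow_mul_exp_neg_mul_sq hb (s := 2) (by norm_num)
  refine ((h₀.add (h₁.const_mul 2)).add h₂).congr (Filter.Eventually.of_forall fun z => ?_)
  simp only [Pi.add_apply, norm_mul, Real.norm_eq_abs, abs_exp, ← sq_abs z]
  ring

lemma integrable_of_abs_le_one_add_abs_sq_mul_exp {f : ℝ → ℝ} {b C x : ℝ} (hb : 0 < b)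
    (hf : AEStronglyMeasurable f)
    (hle : ∀ ξ, |f ξ| ≤ C * ((1 + |ξ - x|) ^ 2 * exp (-b * (ξ - x) ^ 2))) :
    Integrable f :=
  (((integrable_one_add_abs_sq_mul_exp_neg_mul_sq hb).comp_sub_right x).const_mul C).mono' hf
    (Filter.Eventually.of_forall hle)

lemma integral_abs_mul_exp_neg_mul_sq {b : ℝ} (hb : 0 < b) :
    ∫ z : ℝ, |z| * exp (-b * z ^ 2) = 1 / b := by
  have hIoi := integral_rpow_mul_exp_neg_mul_rpow two_pos (by norm_num : (-1 : ℝ) < 1) hb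
  norm_num [rpow_neg_one] at hIoi
  have hsymm := integral_comp_abs (f := fun z => z * exp (-b * z ^ 2))
  simp only [sq_abs, neg_mul, hIoi] at hsymm
  simp only [neg_mul, hsymm]
  field_simp

section Lipschitz

variable {φ : ℝ → ℝ} {L : ℝ}

lemma nonneg_of_abs_sub_le_mul (hφ : ∀ a b, |φ a - φ b| ≤ L * |a - b|) : 0 ≤ L := by
  simpa using (abs_nonneg _).trans (hφ 1 0)

lemma continuous_of_abs_sub_le_mul (hφ : ∀ a b, |φ a - φ b| ≤ L * |a - b|) : Continuous φ :=
  (LipschitzWith.of_dist_le' hφ).continuous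

lemma abs_le_mul_one_add_abs_sub (hφ : ∀ a b, |φ a - φ b| ≤ L * |a - b|) (x ξ : ℝ) :
    |φ ξ| ≤ (|φ x| + L) * (1 + |ξ - x|) := by
  have hL := nonneg_of_abs_sub_le_mul hφ
  have h := abs_sub_abs_le_abs_sub (φ ξ) (φ x)
  nlinarith [hφ ξ x, abs_nonneg (φ x), abs_nonneg (ξ - x)]

lemma abs_integral_mul_sub_sub_le {k : ℝ → ℝ} (hφ : ∀ a b, |φ a - φ b| ≤ L * |a - b|)
    (hk : Integrable k) {x₁ x₂ : ℝ} (h₁ : Integrable fun ξ => φ ξ * k (x₁ - ξ))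
    (h₂ : Integrable fun ξ => φ ξ * k (x₂ - ξ)) :
    |(∫ ξ, φ ξ * k (x₁ - ξ)) - ∫ ξ, φ ξ * k (x₂ - ξ)| ≤ L * (∫ z, |k z|) * |x₁ - x₂| := by
  have hswap : ∀ x, ∫ ξ, φ ξ * k (x - ξ) = ∫ z, φ (x - z) * k z := fun x => by
    rw [← integral_sub_left_eq_self (fun z => φ (x - z) * k z) volume x]
    simp only [sub_sub_cancel]
  have hswap_int : ∀ x, Integrable (fun ξ => φ ξ * k (x - ξ)) →
      Integrable fun z => φ (x - z) * k z := fun x h => by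
    simpa only [sub_sub_cancel] using h.comp_sub_left x
  have hpt : ∀ z, ‖φ (x₁ - z) * k z - φ (x₂ - z) * k z‖ ≤ L * |k z| * |x₁ - x₂| := fun z => by
    rw [Real.norm_eq_abs, ← sub_mul, abs_mul, mul_right_comm]
    gcongr
    simpa using hφ (x₁ - z) (x₂ - z)
  rw [hswap, hswap, ← integral_sub (hswap_int _ h₁) (hswap_int _ h₂), ← Real.norm_eq_abs]
  calc ‖∫ z, (φ (x₁ - z) * k z - φ (x₂ - z) * k z)‖ ≤ ∫ z, L * |k z| * |x₁ - x₂| :=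
        norm_integral_le_of_norm_le ((hk.abs.const_mul L).mul_const _) (ae_of_all _ hpt)
    _ = L * (∫ z, |k z|) * |x₁ - x₂| := by rw [integral_mul_const, integral_const_mul]

end Lipschitz

section HeatKernel

noncomputable def dPhi (z t : ℝ) : ℝ := -(z / (2 * t)) * Phi z t

variable {t : ℝ}

lemma Phi_pos (ht : 0 < t) (z : ℝ) : 0 < Phi z t := by
  unfold Phi
  positivity

lemma hasDerivAt_Phi_s12 (z t : ℝ) : HasDerivAt (fun z => Phi z t) (dPhi z t) z := by
  have h := (((hasDerivAt_pow 2 z).fun_neg.div_const (4 * t)).exp).const_mul (1 / √(4 * π * t))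
  refine h.congr_deriv ?_
  simp only [dPhi, Phi]
  ring

lemma continuous_Phi (t : ℝ) : Continuous fun z => Phi z t := by
  unfold Phi
  fun_prop

lemma continuous_dPhi (t : ℝ) : Continuous fun z => dPhi z t := by
  unfold dPhi Phi
  fun_prop

lemma dPhi_eq (z t : ℝ) :
    dPhi z t = -(1 / √(4 * π * t) / (2 * t)) * (z * exp (-(1 / (4 * t)) * z ^ 2)) := by
  simp only [dPhi, Phi]
  ring_nf

lemma integrable_dPhi (ht : 0 < t) : Integrable fun z => dPhi z t := by
  simp only [dPhi_eq]
  exact (integrable_mul_exp_neg_mul_sq (by positivity)).const_mul _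

lemma integral_abs_dPhi (ht : 0 < t) : ∫ z, |dPhi z t| = 1 / √(π * t) := by
  have hsqrt : √(4 * π * t) = 2 * √(π * t) := by
    rw [mul_assoc, sqrt_mul (by norm_num), show (4 : ℝ) = 2 ^ 2 by norm_num, sqrt_sq two_pos.le]
  simp only [dPhi_eq, abs_mul, abs_neg, abs_of_pos (exp_pos _)]
  rw [integral_const_mul, integral_abs_mul_exp_neg_mul_sq (by positivity), hsqrt,
    abs_of_pos (by positivity)]
  field_simp
  ring

lemma Phi_sub_le (ht : 0 < t) {w x : ℝ} (hw : |w - x| ≤ 1) (ξ : ℝ) :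
    Phi (w - ξ) t ≤ Phi 0 t * exp (1 / (4 * t)) * exp (-(1 / (8 * t)) * (ξ - x) ^ 2) := by
  -- `(ξ - x)² ≤ 2 (w - ξ)² + 2 (w - x)²` and `|w - x| ≤ 1`
  have hsq : (ξ - x) ^ 2 / 2 - 1 ≤ (w - ξ) ^ 2 := by
    nlinarith [sq_nonneg ((w - x) - (ξ - x) / 2), sq_abs (w - x), abs_nonneg (w - x)]
  simp only [Phi, zero_pow two_ne_zero, neg_zero, zero_div, exp_zero, mul_one]
  rw [mul_assoc (1 / √(4 * π * t)), ← exp_add]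
  gcongr
  field_simp
  nlinarith

lemma abs_dPhi_sub_le (ht : 0 < t) {w x : ℝ} (hw : |w - x| ≤ 1) (ξ : ℝ) :
    |dPhi (w - ξ) t| ≤ (1 + |ξ - x|) / (2 * t) *
      (Phi 0 t * exp (1 / (4 * t)) * exp (-(1 / (8 * t)) * (ξ - x) ^ 2)) := by
  have hwξ : |w - ξ| ≤ 1 + |ξ - x| := by
    calc |w - ξ| ≤ |w - x| + |x - ξ| := abs_sub_le _ _ _
      _ ≤ 1 + |ξ - x| := by rw [abs_sub_comm x]; linarith
  rw [dPhi, abs_mul, abs_neg, abs_div, abs_of_pos (by positivity : 0 < 2 * t),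
    abs_of_pos (Phi_pos ht _)]
  exact mul_le_mul (by gcongr) (Phi_sub_le ht hw ξ) (Phi_pos ht _).le (by positivity)

end HeatKernel

section Convolution

variable {φ : ℝ → ℝ} {L t : ℝ}

lemma abs_mul_dPhi_sub_le (hφ : ∀ a b, |φ a - φ b| ≤ L * |a - b|) (ht : 0 < t) {w x : ℝ}
    (hw : |w - x| ≤ 1) (ξ : ℝ) :
    |φ ξ * dPhi (w - ξ) t| ≤ (|φ x| + L) * Phi 0 t * exp (1 / (4 * t)) / (2 * t) *
      ((1 + |ξ - x|) ^ 2 * exp (-(1 / (8 * t)) * (ξ - x) ^ 2)) := by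
  have hφξ := abs_le_mul_one_add_abs_sub hφ x ξ
  rw [abs_mul]
  calc |φ ξ| * |dPhi (w - ξ) t|
      ≤ (|φ x| + L) * (1 + |ξ - x|) * ((1 + |ξ - x|) / (2 * t) *
          (Phi 0 t * exp (1 / (4 * t)) * exp (-(1 / (8 * t)) * (ξ - x) ^ 2))) :=
        mul_le_mul hφξ (abs_dPhi_sub_le ht hw ξ) (abs_nonneg _) ((abs_nonneg _).trans hφξ)
    _ = _ := by ring

lemma integrable_mul_dPhi_sub (hφ : ∀ a b, |φ a - φ b| ≤ L * |a - b|) (ht : 0 < t) (x : ℝ) :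
    Integrable fun ξ => φ ξ * dPhi (x - ξ) t :=
  integrable_of_abs_le_one_add_abs_sq_mul_exp (by positivity)
    ((continuous_of_abs_sub_le_mul hφ).mul
      ((continuous_dPhi t).comp (continuous_sub_left x))).aestronglyMeasurable
    (abs_mul_dPhi_sub_le hφ ht (w := x) (x := x) (by simp))

lemma integrable_mul_Phi_sub (hφ : ∀ a b, |φ a - φ b| ≤ L * |a - b|) (ht : 0 < t) (x : ℝ) :
    Integrable fun ξ => φ ξ * Phi (x - ξ) t := by
  refine integrable_of_abs_le_one_add_abs_sq_mul_exp (C := (|φ x| + L) *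
      (Phi 0 t * exp (1 / (4 * t)))) (x := x) (by positivity : 0 < 1 / (8 * t))
    ((continuous_of_abs_sub_le_mul hφ).mul
      ((continuous_Phi t).comp (continuous_sub_left x))).aestronglyMeasurable fun ξ => ?_
  have hM : 0 ≤ |φ x| + L := add_nonneg (abs_nonneg _) (nonneg_of_abs_sub_le_mul hφ)
  have hφξ : |φ ξ| ≤ (|φ x| + L) * (1 + |ξ - x|) ^ 2 :=
    (abs_le_mul_one_add_abs_sub hφ x ξ).trans
      (mul_le_mul_of_nonneg_left (by nlinarith [abs_nonneg (ξ - x)]) hM)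
  rw [abs_mul, abs_of_pos (Phi_pos ht _)]
  calc |φ ξ| * Phi (x - ξ) t
      ≤ (|φ x| + L) * (1 + |ξ - x|) ^ 2 *
          (Phi 0 t * exp (1 / (4 * t)) * exp (-(1 / (8 * t)) * (ξ - x) ^ 2)) :=
        mul_le_mul hφξ (Phi_sub_le ht (by simp) ξ) (Phi_pos ht _).le ((abs_nonneg _).trans hφξ)
    _ = _ := by ring

lemma hasDerivAt_integral_mul_Phi_sub (hφ : ∀ a b, |φ a - φ b| ≤ L * |a - b|) (ht : 0 < t)
    (x : ℝ) :
    HasDerivAt (fun y => ∫ ξ, φ ξ * Phi (y - ξ) t) (∫ ξ, φ ξ * dPhi (x - ξ) t) x := by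
  have hφc := continuous_of_abs_sub_le_mul hφ
  refine (hasDerivAt_integral_of_dominated_loc_of_deriv_le (Metric.ball_mem_nhds x one_pos)
    (F' := fun y ξ => φ ξ * dPhi (y - ξ) t)
    (Filter.Eventually.of_forall fun y =>
      (hφc.mul ((continuous_Phi t).comp (continuous_sub_left y))).aestronglyMeasurable)
    (integrable_mul_Phi_sub hφ ht x)
    (integrable_mul_dPhi_sub hφ ht x).aestronglyMeasurable
    (ae_of_all _ fun ξ w hw => abs_mul_dPhi_sub_le hφ ht ?_ ξ)
    (((integrable_one_add_abs_sq_mul_exp_neg_mul_sq (by positivity)).comp_sub_right x).const_mul _)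
    (ae_of_all _ fun ξ w _ => ?_)).2
  · rw [Metric.mem_ball, Real.dist_eq] at hw
    exact hw.le
  · simpa using ((hasDerivAt_Phi_s12 (w - ξ) t).comp w ((hasDerivAt_id w).sub_const ξ)).const_mul (φ ξ)

end Convolution

lemma one_div_sqrt_pi_mul_le {ε t : ℝ} (hε : 0 < ε) (hεt : ε ≤ t) :
    1 / √(π * t) ≤ √2 / √ε := by
  have ht : 0 < t := hε.trans_le hεt
  have hsqrt : √2 * √(π * t) = √(2 * π * t) := by rw [← sqrt_mul two_pos.le, mul_assoc]
  rw [div_le_div_iff₀ (by positivity) (sqrt_pos.2 hε), one_mul, hsqrt]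
  exact sqrt_le_sqrt (by nlinarith [pi_gt_three])

theorem stmt12 (φ : ℝ → ℝ) (L ε : ℝ) (hε : 0 < ε)
    (hφ : ∀ x y : ℝ, |φ x - φ y| ≤ L * |x - y|) :
    ∀ t y : ℝ, ε ≤ t →
      |deriv (deriv (fun y' => ∫ ξ : ℝ, φ ξ * Phi (y' - ξ) t)) y|
        ≤ Real.sqrt 2 * L / Real.sqrt ε := by
  intro t y hεt
  have ht : 0 < t := hε.trans_le hεt
  have hL : 0 ≤ L := nonneg_of_abs_sub_le_mul hφ
  have hderiv : deriv (fun y' => ∫ ξ : ℝ, φ ξ * Phi (y' - ξ) t) =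
      fun x => ∫ ξ, φ ξ * dPhi (x - ξ) t :=
    funext fun x => (hasDerivAt_integral_mul_Phi_sub hφ ht x).deriv
  have hlip : ∀ x, |(∫ ξ, φ ξ * dPhi (x - ξ) t) - ∫ ξ, φ ξ * dPhi (y - ξ) t| ≤
      L * (1 / √(π * t)) * |x - y| := fun x => by
    simpa only [integral_abs_dPhi ht] using abs_integral_mul_sub_sub_le hφ (integrable_dPhi ht)
      (integrable_mul_dPhi_sub hφ ht x) (integrable_mul_dPhi_sub hφ ht y)
  rw [hderiv]
  calc |deriv (fun x => ∫ ξ, φ ξ * dPhi (x - ξ) t) y|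
        = ‖deriv (fun x => ∫ ξ, φ ξ * dPhi (x - ξ) t) y‖ := (Real.norm_eq_abs _).symm
    _ ≤ L * (1 / √(π * t)) :=
        norm_deriv_le_of_lip' (mul_nonneg hL (by positivity)) (Filter.Eventually.of_forall hlip)
    _ ≤ L * (√2 / √ε) := mul_le_mul_of_nonneg_left (one_div_sqrt_pi_mul_le hε hεt) hL
    _ = √2 * L / √ε := by ring
end
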